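/- arXiv:2312.13814 — 2 statements merged into one kernel-verified Lean document; each statement's English description precedes it below -/
import Mathlib

section
/- Let H be a Hilbert space and let (σ_λ)_{λ∈Λ} be a family of states (positive trace-one operators) on H with support projections P_λ. Suppose N is a POVM on a measurable space such that for each λ there is a point f(λ) with tr(σ_λ N(X)) = δ_{f(λ)}(X) for all measurable X (where δ is the Dirac measure), and singletons are measurable. Then for any λ, λ' with f(λ) ≠ f(λ'), the support projections satisfy P_λ P_{λ'} = 0. -/
/-!
Put `X = {f λ}`. Both `N(Xᶜ)` and `σ_λ` are positive and `tr (N(Xᶜ) σ_λ) = 0`. Writing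
`σ_λ = s * s` with `s ≥ 0`, cyclicity of the trace on Hilbert–Schmidt operators turns this trace
into `∑ ⟪s bⱼ, N(Xᶜ) s bⱼ⟫`, a sum of nonnegative terms, so `N(Xᶜ) σ_λ = 0` and hence
`N(Xᶜ) P_λ = 0`, i.e. `N(X) P_λ = P_λ`. In the same way `N(X) P_λ' = 0`, and then
`P_λ P_λ' = P_λ N(X) P_λ' = 0`.
-/

open scoped InnerProductSpace Classical
open MeasureTheory ContinuousLinearMap

noncomputable section

/-- A POVM on a measurable space `Ω`, acting on a complex Hilbert space `H`:
a positive-operator-valued map, σ-additive in the weak operator topology,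
normalized to the identity. -/
structure POVM (Ω : Type*) [MeasurableSpace Ω] (H : Type*) [NormedAddCommGroup H]
    [InnerProductSpace ℂ H] [CompleteSpace H] where
  toFun : Set Ω → (H →L[ℂ] H)
  pos : ∀ X, MeasurableSet X → (toFun X).IsPositive
  normalized : toFun Set.univ = 1
  additive : ∀ (φ ψ : H) (f : ℕ → Set Ω), (∀ i, MeasurableSet (f i)) →
    Pairwise (Function.onFun Disjoint f) →
    HasSum (fun i => ⟪φ, (toFun (f i)) ψ⟫_ℂ) ⟪φ, (toFun (⋃ i, f i)) ψ⟫_ℂ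

/-- The trace of an operator computed along a Hilbert basis. -/
def traceAlong {ι H : Type*} [NormedAddCommGroup H] [InnerProductSpace ℂ H] [CompleteSpace H]
    (b : HilbertBasis ι ℂ H) (A : H →L[ℂ] H) : ℂ :=
  ∑' i, ⟪b i, A (b i)⟫_ℂ

open scoped InnerProduct

section HilbertSchmidt

variable {𝕜 ι E : Type*} [RCLike 𝕜] [NormedAddCommGroup E] [InnerProductSpace 𝕜 E]

theorem HilbertBasis.hasSum_norm_inner_sq (b : HilbertBasis ι 𝕜 E) (x : E) :
    HasSum (fun i => ‖⟪b i, x⟫_𝕜‖ ^ 2) (‖x‖ ^ 2) := by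
  simpa [b.repr_apply_apply] using lp.hasSum_norm (p := 2) (by norm_num) (b.repr x)

def IsHilbertSchmidtAlong (b : HilbertBasis ι 𝕜 E) (T : E →L[𝕜] E) : Prop :=
  Summable fun i => ‖T (b i)‖ ^ 2

variable {b : HilbertBasis ι 𝕜 E} {S T : E →L[𝕜] E}

theorem isHilbertSchmidtAlong_iff_summable_norm_inner_sq :
    IsHilbertSchmidtAlong b T ↔ Summable fun p : ι × ι => ‖⟪b p.2, T (b p.1)⟫_𝕜‖ ^ 2 := by
  rw [summable_prod_of_nonneg fun _ => by positivity]
  simp only [fun i => (b.hasSum_norm_inner_sq (T (b i))).tsum_eq,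
    fun i => (b.hasSum_norm_inner_sq (T (b i))).summable, implies_true, true_and]
  rfl

theorem IsHilbertSchmidtAlong.comp_left (hT : IsHilbertSchmidtAlong b T) (A : E →L[𝕜] E) :
    IsHilbertSchmidtAlong b (A ∘L T) :=
  .of_nonneg_of_le (fun _ => by positivity)
    (fun i => pow_le_pow_left₀ (norm_nonneg _) (A.le_opNorm _) 2 |>.trans_eq (mul_pow ..))
    (hT.mul_left (‖A‖ ^ 2))

variable [CompleteSpace E]

theorem IsHilbertSchmidtAlong.adjoint (hT : IsHilbertSchmidtAlong b T) :
    IsHilbertSchmidtAlong b (T†) := by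
  rw [isHilbertSchmidtAlong_iff_summable_norm_inner_sq] at hT ⊢
  refine ((Equiv.prodComm ι ι).summable_iff.mpr hT).congr fun p => ?_
  simp [adjoint_inner_right, norm_inner_symm]

/-- Cyclicity of the trace for Hilbert–Schmidt operators: `tr (S† T) = tr (T S†)`. -/
theorem IsHilbertSchmidtAlong.hasSum_inner_adjoint (hS : IsHilbertSchmidtAlong b S)
    (hT : IsHilbertSchmidtAlong b T) :
    HasSum (fun j => ⟪(T†) (b j), (S†) (b j)⟫_𝕜) (∑' i, ⟪S (b i), T (b i)⟫_𝕜) := by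
  set F : ι × ι → 𝕜 := fun p => ⟪S (b p.1), b p.2⟫_𝕜 * ⟪b p.2, T (b p.1)⟫_𝕜
  have hF : Summable F := by
    refine .of_norm <| .of_nonneg_of_le (fun _ => norm_nonneg _) (fun p => ?_)
      (((isHilbertSchmidtAlong_iff_summable_norm_inner_sq.mp hS).add
        (isHilbertSchmidtAlong_iff_summable_norm_inner_sq.mp hT)).div_const 2)
    rw [norm_mul, norm_inner_symm]
    nlinarith [two_mul_le_add_sq ‖⟪b p.2, S (b p.1)⟫_𝕜‖ ‖⟪b p.2, T (b p.1)⟫_𝕜‖]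
  have hrows : HasSum (fun i => ⟪S (b i), T (b i)⟫_𝕜) (∑' p, F p) :=
    hF.hasSum.prod_fiberwise fun i => b.hasSum_inner_mul_inner _ _
  have hcols : ∀ j, HasSum (fun i => F (i, j)) ⟪(T†) (b j), (S†) (b j)⟫_𝕜 := by
    intro j
    convert b.hasSum_inner_mul_inner _ _ using 2 with i
    simp only [F, adjoint_inner_left, adjoint_inner_right, mul_comm]
  rw [hrows.tsum_eq]
  exact ((Equiv.prodComm ι ι).hasSum_iff.mpr hF.hasSum).prod_fiberwise hcols

end HilbertSchmidt

section Trace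

open scoped ComplexOrder

variable {ι H : Type*} [NormedAddCommGroup H] [InnerProductSpace ℂ H] [CompleteSpace H]

theorem ContinuousLinearMap.IsPositive.apply_eq_zero_of_inner_eq_zero {C : H →L[ℂ] H}
    (hC : C.IsPositive) {x : H} (h : ⟪x, C x⟫_ℂ = 0) : C x = 0 := by
  obtain ⟨D, rfl⟩ := CStarAlgebra.nonneg_iff_eq_star_mul_self.mp ((nonneg_iff_isPositive C).mpr hC)
  rw [star_eq_adjoint, mul_apply_eq_comp, adjoint_inner_right, inner_self_eq_zero] at h
  rw [mul_apply_eq_comp, h, map_zero]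

theorem IsHilbertSchmidtAlong.of_isPositive_of_summable {b : HilbertBasis ι ℂ H} {s : H →L[ℂ] H}
    (hs : s.IsPositive) (h : Summable fun i => ⟪b i, (s * s) (b i)⟫_ℂ) :
    IsHilbertSchmidtAlong b s := by
  refine (Complex.reCLM.summable h).congr fun i => ?_
  rw [mul_apply_eq_comp, ← adjoint_inner_left, hs.isSelfAdjoint.adjoint_eq]
  simp [inner_self_eq_norm_sq_to_K, ← Complex.ofReal_pow]

theorem comp_eq_zero_of_traceAlong_eq_zero (b : HilbertBasis ι ℂ H) {C σ : H →L[ℂ] H}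
    (hC : C.IsPositive) (hσ : σ.IsPositive) (hσb : Summable fun i => ⟪b i, σ (b i)⟫_ℂ)
    (h : traceAlong b (C ∘L σ) = 0) : C ∘L σ = 0 := by
  obtain ⟨s, hs, rfl⟩ :=
    CStarAlgebra.nonneg_iff_exists_nonneg_and_eq_mul_self.mp ((nonneg_iff_isPositive σ).mpr hσ)
  rw [nonneg_iff_isPositive] at hs
  have hsHS : IsHilbertSchmidtAlong b s := .of_isPositive_of_summable hs hσb
  have hsCHS : IsHilbertSchmidtAlong b (s ∘L C) := by
    simpa [adjoint_comp, hs.isSelfAdjoint.adjoint_eq, hC.isSelfAdjoint.adjoint_eq]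
      using (hsHS.comp_left C).adjoint
  have htrace : ∑' i, ⟪(s ∘L C) (b i), s (b i)⟫_ℂ = 0 := by
    rw [← h, traceAlong]
    refine tsum_congr fun i => ?_
    calc ⟪s (C (b i)), s (b i)⟫_ℂ = ⟪C (b i), s (s (b i))⟫_ℂ := hs.isSymmetric _ _
      _ = ⟪b i, C (s (s (b i)))⟫_ℂ := hC.isSymmetric _ _
  have hsum := hsCHS.hasSum_inner_adjoint hsHS
  rw [htrace, adjoint_comp, hs.isSelfAdjoint.adjoint_eq, hC.isSelfAdjoint.adjoint_eq] at hsum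
  have hCs : C ∘L s = 0 := by
    refine ext_on (Submodule.dense_iff_topologicalClosure_eq_top.mpr b.dense_span) ?_
    rintro _ ⟨j, rfl⟩
    exact hC.apply_eq_zero_of_inner_eq_zero
      (congrFun ((hasSum_zero_iff_of_nonneg fun j => hC.inner_nonneg_right _).mp hsum) j)
  rw [mul_def, ← comp_assoc, hCs, zero_comp]

end Trace

theorem ContinuousLinearMap.comp_eq_zero_of_range_le_closure {R M : Type*} [Semiring R]
    [AddCommMonoid M] [TopologicalSpace M] [T2Space M] [Module R M] [ContinuousAdd M]
    [ContinuousConstSMul R M] {C σ P : M →L[R] M} (hCσ : C ∘L σ = 0)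
    (hP : LinearMap.range (P : M →ₗ[R] M) ≤
      (LinearMap.range (σ : M →ₗ[R] M)).topologicalClosure) :
    C ∘L P = 0 := by
  have hσC : LinearMap.range (σ : M →ₗ[R] M) ≤ LinearMap.ker (C : M →ₗ[R] M) :=
    LinearMap.range_le_ker_iff.mpr congr(($hCσ : M →ₗ[R] M))
  exact coe_injective <| LinearMap.range_le_ker_iff.mp <|
    hP.trans (Submodule.topologicalClosure_minimal _ hσC C.isClosed_ker)

namespace POVM

variable {Ω H : Type*} [MeasurableSpace Ω] [NormedAddCommGroup H] [InnerProductSpace ℂ H]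
  [CompleteSpace H] (N : POVM Ω H)

theorem inner_toFun_empty (φ ψ : H) : ⟪φ, N.toFun ∅ ψ⟫_ℂ = 0 := by
  have h := N.additive φ ψ (fun _ => ∅) (fun _ => .empty) fun _ _ _ => disjoint_bot_left
  rw [Set.iUnion_empty] at h
  exact tendsto_nhds_unique tendsto_const_nhds h.summable.tendsto_atTop_zero

def innerVectorMeasure (φ ψ : H) : VectorMeasure Ω ℂ where
  measureOf' X := if MeasurableSet X then ⟪φ, N.toFun X ψ⟫_ℂ else 0
  empty' := by simp [inner_toFun_empty]
  not_measurable' _ hX := if_neg hX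
  m_iUnion' f hf hd := by
    simpa only [hf, MeasurableSet.iUnion hf, if_true] using N.additive φ ψ f hf hd

theorem toFun_compl {X : Set Ω} (hX : MeasurableSet X) : N.toFun Xᶜ = 1 - N.toFun X := by
  ext ψ
  refine ext_inner_left ℂ fun φ => ?_
  have h := VectorMeasure.of_compl (v := N.innerVectorMeasure φ ψ) hX
  simpa [innerVectorMeasure, hX, hX.compl, N.normalized, inner_sub_right] using h

end POVM

theorem IsSelfAdjoint.mul_eq_zero_of_one_sub_mul_eq_zero_of_mul_eq_zero {R : Type*} [Ring R]
    [StarRing R] {a p q : R} (ha : IsSelfAdjoint a) (hp : IsSelfAdjoint p)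
    (hap : (1 - a) * p = 0) (haq : a * q = 0) : p * q = 0 := by
  have hpa : p * a = p := by
    simpa [sub_mul, sub_eq_zero, eq_comm, ha.star_eq, hp.star_eq] using congr(star $hap)
  rw [← hpa, mul_assoc, haq, mul_zero]

/-- If `(σ_λ)` is a family of states with support projections `P_λ`, `N` a POVM,
and `tr(σ_λ N(X)) = δ_{f(λ)}(X)` for all measurable `X`, then `f λ ≠ f λ'` implies
`P_λ P_{λ'} = 0`. -/
theorem support_projections_orthogonal
    {H : Type*} [NormedAddCommGroup H] [InnerProductSpace ℂ H] [CompleteSpace H]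
    {Ω : Type*} [MeasurableSpace Ω] (hsing : ∀ ω : Ω, MeasurableSet ({ω} : Set Ω))
    {Λ : Type*} {ι : Type*} (b : HilbertBasis ι ℂ H)
    (σ : Λ → (H →L[ℂ] H))
    (hσpos : ∀ l, (σ l).IsPositive)
    (hσtr : ∀ l, traceAlong b (σ l) = 1)
    (P : Λ → (H →L[ℂ] H))
    (hPproj : ∀ l, IsIdempotentElem (P l) ∧ IsSelfAdjoint (P l))
    (hPrange : ∀ l, LinearMap.range (P l : H →ₗ[ℂ] H)
      = (LinearMap.range (σ l : H →ₗ[ℂ] H)).topologicalClosure)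
    (N : POVM Ω H) (f : Λ → Ω)
    (hdirac : ∀ l (X : Set Ω), MeasurableSet X →
      traceAlong b ((N.toFun X) ∘L (σ l)) = if f l ∈ X then 1 else 0) :
    ∀ l l', f l ≠ f l' → (P l) ∘L (P l') = 0 := by
  intro l l' hne
  have hX := hsing (f l)
  have hsum (k : Λ) : Summable fun i => ⟪b i, σ k (b i)⟫_ℂ := by
    by_contra hk
    simpa [traceAlong, tsum_eq_zero_of_not_summable hk] using hσtr k
  have hcompl : N.toFun {f l}ᶜ ∘L P l = 0 := by
    refine comp_eq_zero_of_range_le_closure ?_ (hPrange l).le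
    refine comp_eq_zero_of_traceAlong_eq_zero b (N.pos _ hX.compl) (hσpos l) (hsum l) ?_
    simp [hdirac l _ hX.compl]
  have hsingleton : N.toFun {f l} ∘L P l' = 0 := by
    refine comp_eq_zero_of_range_le_closure ?_ (hPrange l').le
    refine comp_eq_zero_of_traceAlong_eq_zero b (N.pos _ hX) (hσpos l') (hsum l') ?_
    simp [hdirac l' _ hX, hne.symm]
  rw [N.toFun_compl hX] at hcompl
  exact (N.pos _ hX).isSelfAdjoint.mul_eq_zero_of_one_sub_mul_eq_zero_of_mul_eq_zero
    (hPproj l).2 hcompl hsingleton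
end
end

section
/- The set SA_n of n-preparable discrete state assemblages with a fixed finite number of outcomes a and settings x, acting on ℂ^d, is compact in the norm topology of the direct sum ⊕_{a,x} L(ℂ^d). -/
/-!
An `n`-preparable assemblage is the image of a pair (state `ρ`, family of POVMs `N`) under the
continuous map `(ρ, N) ↦ tr_A[(N_{a|x} ⊗ 1) ρ]`, so it suffices that both parameter sets are
compact. They are closed, and bounded because a positive semidefinite matrix satisfies
`|M i j|² ≤ M i i * M j j` (write `M = B* B` as a Gram matrix and apply Cauchy–Schwarz), while
its diagonal is dominated by `tr ρ = 1`, resp. by the diagonal of `∑_a N_{a|x} = 1`.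
-/

open scoped Kronecker ComplexOrder
open Matrix

noncomputable section

/-- Partial trace over the first factor of a matrix on `ℂ^n ⊗ ℂ^d`. -/
def partialTraceA {n d : ℕ} (M : Matrix (Fin n × Fin d) (Fin n × Fin d) ℂ) :
    Matrix (Fin d) (Fin d) ℂ :=
  fun j j' => ∑ i : Fin n, M (i, j) (i, j')

/-- The set `SA_n` of `n`-preparable state assemblages with `A` outcomes and `X` settings on
`ℂ^d`: those obtained as `σ_{a|x} = tr_A[(N_{a|x} ⊗ id)ρ]` from a state `ρ` on
`ℂ^n ⊗ ℂ^d` (WLOG the ancilla has dimension `n`, which enforces Schmidt number `≤ n`)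
and POVMs `{N_{a|x}}_a` on the ancilla. -/
def SA (n d A X : ℕ) :
    Set (Fin A → Fin X → Matrix (Fin d) (Fin d) ℂ) :=
  {S | ∃ ρ : Matrix (Fin n × Fin d) (Fin n × Fin d) ℂ,
    ρ.PosSemidef ∧ ρ.trace = 1 ∧
    ∃ N : Fin A → Fin X → Matrix (Fin n) (Fin n) ℂ,
      (∀ a x, (N a x).PosSemidef) ∧
      (∀ x, ∑ a, N a x = 1) ∧
      (∀ a x, S a x = partialTraceA (((N a x) ⊗ₖ (1 : Matrix (Fin d) (Fin d) ℂ)) * ρ))}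

section

variable {𝕜 m : Type*} [RCLike 𝕜]

theorem Matrix.PosSemidef.re_apply_self_nonneg {M : Matrix m m 𝕜} (hM : M.PosSemidef) (i : m) :
    0 ≤ RCLike.re (M i i) :=
  (RCLike.nonneg_iff.mp hM.diag_nonneg).1

theorem Matrix.PosSemidef.re_apply_self_le_re_sum_apply_self {ι : Type*} [Fintype ι]
    {N : ι → Matrix m m 𝕜} (hN : ∀ a, (N a).PosSemidef) (a : ι) (i : m) :
    RCLike.re (N a i i) ≤ RCLike.re ((∑ b, N b) i i) := by
  simp only [Matrix.sum_apply, map_sum]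
  exact Finset.single_le_sum (f := fun b => RCLike.re (N b i i))
    (fun b _ => (hN b).re_apply_self_nonneg i) (Finset.mem_univ a)

variable [Fintype m]

theorem Matrix.PosSemidef.re_apply_le_re_trace {M : Matrix m m 𝕜} (hM : M.PosSemidef) (i : m) :
    RCLike.re (M i i) ≤ RCLike.re M.trace := by
  simp only [trace, diag, map_sum]
  exact Finset.single_le_sum (f := fun j => RCLike.re (M j j))
    (fun j _ => hM.re_apply_self_nonneg j) (Finset.mem_univ i)

theorem isClosed_setOf_posSemidef : IsClosed {M : Matrix m m 𝕜 | M.PosSemidef} := by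
  simp only [posSemidef_iff_dotProduct_mulVec, Set.ofPred_and, Set.ofPred_forall]
  exact (isClosed_eq continuous_id.matrix_conjTranspose continuous_id).inter <|
    isClosed_iInter fun x => isClosed_le continuous_const <|
      continuous_const.dotProduct (continuous_id.matrix_mulVec continuous_const)

theorem Matrix.PosSemidef.norm_apply_sq_le {M : Matrix m m 𝕜} (hM : M.PosSemidef) (i j : m) :
    ‖M i j‖ ^ 2 ≤ RCLike.re (M i i) * RCLike.re (M j j) := by
  classical
  open scoped MatrixOrder in
  obtain ⟨B, rfl⟩ := CStarAlgebra.nonneg_iff_eq_star_mul_self.mp hM.nonneg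
  set v : m → EuclideanSpace 𝕜 m := fun i => WithLp.toLp 2 fun k => B k i
  have hgram : star B * B = gram 𝕜 v := by
    ext i j
    simp [v, gram_apply, Matrix.mul_apply, PiLp.inner_apply, mul_comm]
  simp only [hgram, gram_apply, sq]
  nth_rewrite 2 [norm_inner_symm]
  exact inner_mul_inner_self_le _ _

theorem Matrix.PosSemidef.norm_apply_le {M : Matrix m m 𝕜} (hM : M.PosSemidef) {c : ℝ}
    (hc : ∀ i, RCLike.re (M i i) ≤ c) (i j : m) : ‖M i j‖ ≤ c := by
  have hc0 : 0 ≤ c := (hM.re_apply_self_nonneg i).trans (hc i)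
  rw [← pow_le_pow_iff_left₀ (norm_nonneg _) hc0 two_ne_zero, sq c]
  exact (hM.norm_apply_sq_le i j).trans <|
    mul_le_mul (hc i) (hc j) (hM.re_apply_self_nonneg j) hc0

theorem isCompact_setOf_posSemidef_re_diag_le (c : ℝ) :
    IsCompact {M : Matrix m m 𝕜 | M.PosSemidef ∧ ∀ i, RCLike.re (M i i) ≤ c} := by
  have hclosed : IsClosed {M : Matrix m m 𝕜 | M.PosSemidef ∧ ∀ i, RCLike.re (M i i) ≤ c} := by
    simp only [Set.ofPred_and, Set.ofPred_forall]
    exact isClosed_setOf_posSemidef.inter <| isClosed_iInter fun i =>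
      isClosed_le (RCLike.continuous_re.comp (continuous_id.matrix_elem i i)) continuous_const
  refine (isCompact_closedBall (0 : 𝕜) c).matrix.of_isClosed_subset hclosed ?_
  rintro M ⟨hM, hc⟩ i j
  simpa using hM.norm_apply_le hc i j

def densityMatrices (m 𝕜 : Type*) [Fintype m] [RCLike 𝕜] : Set (Matrix m m 𝕜) :=
  {ρ | ρ.PosSemidef ∧ ρ.trace = 1}

def measurementAssemblages (ι κ m 𝕜 : Type*) [Fintype ι] [Fintype m] [DecidableEq m] [RCLike 𝕜] :
    Set (ι → κ → Matrix m m 𝕜) :=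
  {N | (∀ a x, (N a x).PosSemidef) ∧ ∀ x, ∑ a, N a x = 1}

theorem isCompact_densityMatrices : IsCompact (densityMatrices m 𝕜) := by
  refine (isCompact_setOf_posSemidef_re_diag_le (m := m) (𝕜 := 𝕜) 1).of_isClosed_subset ?_ ?_
  · exact isClosed_setOf_posSemidef.inter <|
      isClosed_eq continuous_id.matrix_trace continuous_const
  · rintro ρ ⟨hρ, htr⟩
    refine ⟨hρ, fun i => ?_⟩
    simpa [htr] using hρ.re_apply_le_re_trace i

theorem isCompact_measurementAssemblages (ι κ : Type*) [Fintype ι] [DecidableEq m] :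
    IsCompact (measurementAssemblages ι κ m 𝕜) := by
  have hK := isCompact_setOf_posSemidef_re_diag_le (m := m) (𝕜 := 𝕜) 1
  refine (isCompact_univ_pi fun _ : ι => isCompact_univ_pi fun _ : κ => hK).of_isClosed_subset
    ?_ ?_
  · simp only [measurementAssemblages, Set.ofPred_and, Set.ofPred_forall]
    refine (isClosed_iInter fun a => isClosed_iInter fun x => ?_).inter
      (isClosed_iInter fun x => isClosed_eq ?_ continuous_const)
    · exact isClosed_setOf_posSemidef.preimage (by fun_prop)
    · fun_prop
  · rintro N ⟨hN, hsum⟩ a - x -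
    refine ⟨hN a x, fun i => ?_⟩
    simpa [hsum x] using Matrix.PosSemidef.re_apply_self_le_re_sum_apply_self (hN · x) a i

end

theorem Continuous.matrix_kronecker {X R l m n p : Type*} [TopologicalSpace X] [TopologicalSpace R]
    [Mul R] [ContinuousMul R] {A : X → Matrix l m R} {B : X → Matrix n p R} (hA : Continuous A)
    (hB : Continuous B) : Continuous fun x => A x ⊗ₖ B x :=
  continuous_matrix fun _ _ => (hA.matrix_elem _ _).mul (hB.matrix_elem _ _)

theorem continuous_partialTraceA {n d : ℕ} :
    Continuous (partialTraceA : Matrix (Fin n × Fin d) (Fin n × Fin d) ℂ → _) :=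
  continuous_matrix fun _ _ => continuous_finsetSum _ fun _ _ => continuous_id.matrix_elem _ _

def preparedAssemblage {n d A X : ℕ} (ρ : Matrix (Fin n × Fin d) (Fin n × Fin d) ℂ)
    (N : Fin A → Fin X → Matrix (Fin n) (Fin n) ℂ) : Fin A → Fin X → Matrix (Fin d) (Fin d) ℂ :=
  fun a x => partialTraceA ((N a x ⊗ₖ 1) * ρ)

theorem continuous_preparedAssemblage {n d A X : ℕ} :
    Continuous (Function.uncurry (@preparedAssemblage n d A X)) :=
  continuous_pi fun a => continuous_pi fun x => continuous_partialTraceA.comp <|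
    (Continuous.matrix_kronecker (by fun_prop) continuous_const).matrix_mul continuous_fst

theorem SA_eq_image_preparedAssemblage (n d A X : ℕ) :
    SA n d A X = Function.uncurry preparedAssemblage ''
      (densityMatrices (Fin n × Fin d) ℂ ×ˢ measurementAssemblages (Fin A) (Fin X) (Fin n) ℂ) := by
  ext S
  constructor
  · rintro ⟨ρ, hρ, htr, N, hN, hsum, hS⟩
    exact ⟨(ρ, N), ⟨⟨hρ, htr⟩, hN, hsum⟩, funext₂ fun a x => (hS a x).symm⟩
  · rintro ⟨⟨ρ, N⟩, ⟨⟨hρ, htr⟩, hN, hsum⟩, rfl⟩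
    exact ⟨ρ, hρ, htr, N, hN, hsum, fun a x => rfl⟩

/-- the set of `n`-preparable discrete state assemblages with a fixed finite
number of outcomes and settings on `ℂ^d` is compact. -/
theorem SA_isCompact (n d A X : ℕ) :
    IsCompact (SA n d A X) := by
  rw [SA_eq_image_preparedAssemblage]
  exact (isCompact_densityMatrices.prod (isCompact_measurementAssemblages _ _)).image
    continuous_preparedAssemblage
end
end
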